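/- Let (Ω, F, P) be a probability space with filtration F₀ ⊆ F₁ ⊆ … ⊆ F_N, let E be a real normed vector space, and let Θ ⊆ E be a nonempty closed convex separable set. Fix β > 0, R > 0, N ≥ 1, and a constant Ê ≥ 0. For n = 1, …, N let ℓ̂_n : Ω × E → ℝ be such that almost surely ℓ̂_n(ω, ·) is CSN with smoothness β; let θ_n : Ω → Θ be F_{n−1}-measurable with ℓ̂_n(·, θ_n(·)) integrable; and let ℓ_n : Ω × E → ℝ satisfy, almost surely, E[ℓ̂_n(·, θ_n(·)) | F_{n−1}] = ℓ_n(·, θ_n(·)) and ℓ_n(ω, θ) ≥ 0 for all θ. Let ε̂(ω) = (1/N) inf_{θ∈Θ} Σ_{n=1}^N ℓ̂_n(ω, θ), assume ε̂ is integrable, and assume ε̂ ≤ Ê almost surely. Set η* = 1/(2(β + √(β² + βNÊ/(2R²)))), and assume that almost surely Regret(ℓ̂_n) ≤ R²/η* + (η*/2) Σ_{n=1}^N ‖ℓ̂_n′(θ_n)‖², where ℓ̂_n′(θ_n) is the Fréchet derivative of ℓ̂_n(ω, ·) at θ_n(ω). Then E[(1/N) Σ_{n=1}^N ℓ_n(·,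 θ_n(·)) − ε̂] ≤ 8βR²/N + √(8βR²Ê/N). -/

import Mathlib

/-!
A nonnegative function with `β`-Lipschitz derivative is self-bounding: `‖f' x‖² ≤ 2 β f x`,
because the quadratic upper bound `f x - t f' x w + (β / 2) t² ‖w‖²` of the descent lemma stays
nonnegative in `t`, so its discriminant is nonpositive. In the regret assumption this bounds the
gradient term by the learner's own cumulative loss, and the tuned stepsize turns the resulting
inequality into the stated rate, deterministically for every `ω`. In expectation the conditional
losses `ℓ_n` can then be replaced by the sampled ones, since `∫ E[X | F_{n-1}] = ∫ X`.
-/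

open MeasureTheory Finset

/-- A differentiable function `f : E → ℝ` is CSN with smoothness `β` if it is convex,
non-negative, and its Fréchet derivative is `β`-Lipschitz in the operator (dual) norm. -/
def IsCSN {E : Type*} [NormedAddCommGroup E] [NormedSpace ℝ E]
    (f : E → ℝ) (β : ℝ) : Prop :=
  ConvexOn ℝ Set.univ f ∧ (∀ x, 0 ≤ f x) ∧ Differentiable ℝ f ∧
    ∀ x y, ‖fderiv ℝ f x - fderiv ℝ f y‖ ≤ β * ‖x - y‖

/-- `Regret(f_n) = Σ_{n=1}^N f_n(θ_n) − inf_{θ ∈ Θ} Σ_{n=1}^N f_n(θ)`. -/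
noncomputable def regret {E : Type*} (Θ : Set E) (N : ℕ)
    (f : ℕ → E → ℝ) (θ : ℕ → E) : ℝ :=
  (∑ n ∈ Finset.Icc 1 N, f n (θ n))
    - sInf ((fun x => ∑ n ∈ Finset.Icc 1 N, f n x) '' Θ)

section SmoothNonneg

variable {E : Type*} [NormedAddCommGroup E] [NormedSpace ℝ E] {f : E → ℝ} {β : ℝ}

theorem apply_add_le_of_norm_fderiv_sub_le (hf : Differentiable ℝ f)
    (hL : ∀ x y, ‖fderiv ℝ f x - fderiv ℝ f y‖ ≤ β * ‖x - y‖) (x v : E) :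
    f (x + v) ≤ f x + fderiv ℝ f x v + β / 2 * ‖v‖ ^ 2 := by
  set g : ℝ → ℝ := fun t => f (x + t • v) - t * fderiv ℝ f x v - β / 2 * t ^ 2 * ‖v‖ ^ 2
  have hg : ∀ t, HasDerivAt g
      (fderiv ℝ f (x + t • v) v - fderiv ℝ f x v - β * t * ‖v‖ ^ 2) t := by
    intro t
    have hline : HasDerivAt (fun t : ℝ => x + t • v) v t := by
      simpa using ((hasDerivAt_id t).smul_const v).const_add x
    have h := (((hf _).hasFDerivAt.comp_hasDerivAt t hline).sub
      ((hasDerivAt_id t).mul_const (fderiv ℝ f x v))).sub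
      (((hasDerivAt_pow 2 t).const_mul (β / 2)).mul_const (‖v‖ ^ 2))
    exact h.congr_deriv
      (by simp only [one_mul, Nat.cast_ofNat, Nat.add_one_sub_one, pow_one]; ring)
  have hg_anti : AntitoneOn g (Set.Ici 0) := by
    refine antitoneOn_of_deriv_nonpos (convex_Ici 0)
      (fun t _ => (hg t).continuousAt.continuousWithinAt)
      (fun t _ => (hg t).differentiableAt.differentiableWithinAt) fun t ht => ?_
    rw [interior_Ici] at ht
    rw [(hg t).deriv, sub_nonpos]
    calc fderiv ℝ f (x + t • v) v - fderiv ℝ f x v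
        = (fderiv ℝ f (x + t • v) - fderiv ℝ f x) v := rfl
      _ ≤ ‖fderiv ℝ f (x + t • v) - fderiv ℝ f x‖ * ‖v‖ :=
          (Real.le_norm_self _).trans (ContinuousLinearMap.le_opNorm _ _)
      _ ≤ β * ‖x + t • v - x‖ * ‖v‖ := by gcongr; exact hL _ _
      _ = β * t * ‖v‖ ^ 2 := by
        rw [add_sub_cancel_left, norm_smul, Real.norm_of_nonneg ht.le]; ring
  have h01 : g 1 ≤ g 0 := hg_anti Set.self_mem_Ici (Set.mem_Ici.2 zero_le_one) zero_le_one
  have hg0 : g 0 = f x := by simp [g]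
  have hg1 : g 1 = f (x + v) - fderiv ℝ f x v - β / 2 * ‖v‖ ^ 2 := by simp [g]
  linarith

theorem sq_norm_fderiv_le_of_nonneg (hβ : 0 ≤ β) (hf : Differentiable ℝ f)
    (hL : ∀ x y, ‖fderiv ℝ f x - fderiv ℝ f y‖ ≤ β * ‖x - y‖) (hf0 : ∀ x, 0 ≤ f x) (x : E) :
    ‖fderiv ℝ f x‖ ^ 2 ≤ 2 * β * f x := by
  have hdir : ∀ w, |fderiv ℝ f x w| ≤ √(2 * β * f x) * ‖w‖ := by
    intro w
    have hquad : ∀ t : ℝ, 0 ≤ β / 2 * ‖w‖ ^ 2 * (t * t) + -fderiv ℝ f x w * t + f x := by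
      intro t
      have hdescent := apply_add_le_of_norm_fderiv_sub_le hf hL x (-(t • w))
      simp only [map_neg, map_smul, smul_eq_mul, norm_neg, norm_smul, Real.norm_eq_abs, mul_pow,
        sq_abs] at hdescent
      nlinarith [hf0 (x + -(t • w))]
    have hdisc := discrim_le_zero hquad
    rw [discrim] at hdisc
    rw [← Real.sqrt_sq (norm_nonneg w), ← Real.sqrt_mul' _ (sq_nonneg _)]
    exact Real.abs_le_sqrt (by linarith)
  have hop : ‖fderiv ℝ f x‖ ≤ √(2 * β * f x) :=
    ContinuousLinearMap.opNorm_le_bound _ (Real.sqrt_nonneg _) hdir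
  calc ‖fderiv ℝ f x‖ ^ 2 ≤ √(2 * β * f x) ^ 2 := by gcongr
    _ = 2 * β * f x := Real.sq_sqrt (mul_nonneg (by positivity) (hf0 x))

theorem IsCSN.sq_norm_fderiv_le (hf : IsCSN f β) (hβ : 0 ≤ β) (x : E) :
    ‖fderiv ℝ f x‖ ^ 2 ≤ 2 * β * f x :=
  sq_norm_fderiv_le_of_nonneg hβ hf.2.2.1 hf.2.2.2 hf.2.1 x

end SmoothNonneg

theorem sub_le_of_le_tuned_stepsize {β R D A B η : ℝ} (hβ : 0 < β) (hR : R ≠ 0) (hD : 0 ≤ D)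
    (hη : η = 1 / (2 * (β + √(β ^ 2 + β * D / (2 * R ^ 2)))))
    (hB : B ≤ D) (hreg : A - B ≤ R ^ 2 / η + η / 2 * (4 * β * A)) :
    A - B ≤ 8 * β * R ^ 2 + √(8 * β * R ^ 2 * D) := by
  set c := β * D / (2 * R ^ 2) with hc
  set s := √(β ^ 2 + c) with hs
  have hc0 : 0 ≤ c := by positivity
  have hs2 : s ^ 2 = β ^ 2 + c := Real.sq_sqrt (by positivity)
  have hs0 : 0 < s := Real.sqrt_pos.2 (by positivity)
  have hβc : β * D = 2 * R ^ 2 * c := by rw [hc]; field_simp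
  subst hη
  have hreg' : (β + s) * (A - B) ≤ 2 * R ^ 2 * (β + s) ^ 2 + β * A := by
    calc (β + s) * (A - B)
        ≤ (β + s) * (R ^ 2 / (1 / (2 * (β + s))) + 1 / (2 * (β + s)) / 2 * (4 * β * A)) :=
          mul_le_mul_of_nonneg_left hreg (by positivity)
      _ = 2 * R ^ 2 * (β + s) ^ 2 + β * A := by field_simp; ring
  -- `β B ≤ β D = 2 R² (s - β) (s + β)`: this is where the tuned `η` closes the bound
  have hmain : s * (A - B) ≤ s * (4 * R ^ 2 * (β + s)) := by
    nlinarith [mul_le_mul_of_nonneg_left hB hβ.le]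
  have hs_le : s ≤ β + √c := by
    rw [hs, Real.sqrt_le_left (by positivity)]
    nlinarith [Real.sq_sqrt hc0, Real.sqrt_nonneg c]
  have hsqrt : 4 * R ^ 2 * √c = √(8 * β * R ^ 2 * D) := by
    rw [show 8 * β * R ^ 2 * D = (4 * R ^ 2) ^ 2 * c by rw [hc]; field_simp; ring,
      Real.sqrt_mul (by positivity), Real.sqrt_sq (by positivity)]
  calc A - B ≤ 4 * R ^ 2 * (β + s) := le_of_mul_le_mul_left hmain hs0
    _ ≤ 4 * R ^ 2 * (β + (β + √c)) := by gcongr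
    _ = 8 * β * R ^ 2 + √(8 * β * R ^ 2 * D) := by rw [← hsqrt]; ring

theorem average_sub_le_of_regret_le {E : Type*} [NormedAddCommGroup E] [NormedSpace ℝ E]
    {Θ : Set E} {β R Ehat η ε : ℝ} {N : ℕ} {f : ℕ → E → ℝ} {θ : ℕ → E}
    (hβ : 0 < β) (hR : R ≠ 0) (hEhat : 0 ≤ Ehat) (hN : 1 ≤ N)
    (hf : ∀ n ∈ Icc 1 N, IsCSN (f n) β)
    (hε : ε = 1 / (N : ℝ) * sInf ((fun x => ∑ n ∈ Icc 1 N, f n x) '' Θ)) (hεE : ε ≤ Ehat)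
    (hη : η = 1 / (2 * (β + √(β ^ 2 + β * N * Ehat / (2 * R ^ 2)))))
    (hreg : regret Θ N f θ ≤ R ^ 2 / η + η / 2 * ∑ n ∈ Icc 1 N, ‖fderiv ℝ (f n) (θ n)‖ ^ 2) :
    1 / (N : ℝ) * ∑ n ∈ Icc 1 N, f n (θ n) - ε
      ≤ 8 * β * R ^ 2 / N + √(8 * β * R ^ 2 * Ehat / N) := by
  have hN0 : (0 : ℝ) < N := by exact_mod_cast hN
  set A := ∑ n ∈ Icc 1 N, f n (θ n)
  set S := sInf ((fun x => ∑ n ∈ Icc 1 N, f n x) '' Θ)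
  have hgrad : ∑ n ∈ Icc 1 N, ‖fderiv ℝ (f n) (θ n)‖ ^ 2 ≤ 4 * β * A := by
    rw [mul_sum]
    refine sum_le_sum fun n hn => ?_
    nlinarith [(hf n hn).sq_norm_fderiv_le hβ.le (θ n), (hf n hn).2.1 (θ n)]
  have hη0 : 0 ≤ η := by rw [hη]; positivity
  have hS : S ≤ N * Ehat := by
    rwa [hε, one_div_mul_eq_div, div_le_iff₀' hN0] at hεE
  have hAS := sub_le_of_le_tuned_stepsize (η := η) hβ hR (by positivity) (by rwa [← mul_assoc])
    hS (hreg.trans (by gcongr) : A - S ≤ _)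
  have hsqrt : √(8 * β * R ^ 2 * (N * Ehat)) / N = √(8 * β * R ^ 2 * Ehat / N) := by
    rw [show 8 * β * R ^ 2 * (N * Ehat) = 8 * β * R ^ 2 * Ehat / N * N ^ 2 by field_simp,
      Real.sqrt_mul (by positivity), Real.sqrt_sq hN0.le]
    field_simp
  calc 1 / (N : ℝ) * A - ε = (A - S) / N := by rw [hε]; ring
    _ ≤ (8 * β * R ^ 2 + √(8 * β * R ^ 2 * (N * Ehat))) / N := by gcongr
    _ = 8 * β * R ^ 2 / N + √(8 * β * R ^ 2 * Ehat / N) := by rw [add_div, hsqrt]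

theorem online_il_bias_dependent_rate_in_expectation_general
    {Ω : Type*} {m0 : MeasurableSpace Ω} (P : Measure Ω) [IsProbabilityMeasure P]
    (F : Filtration ℕ m0)
    {E : Type*} [NormedAddCommGroup E] [NormedSpace ℝ E]
    (Θ : Set E)
    (β R Ehat : ℝ) (hβ : 0 < β) (hR : 0 < R) (hEhat : 0 ≤ Ehat)
    (N : ℕ) (hN : 1 ≤ N)
    (lhat l : ℕ → Ω → E → ℝ)
    (hCSN : ∀ n ∈ Finset.Icc 1 N, ∀ᵐ ω ∂P, IsCSN (lhat n ω) β)
    (θ : ℕ → Ω → E)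
    (hint : ∀ n ∈ Finset.Icc 1 N, Integrable (fun ω => lhat n ω (θ n ω)) P)
    (hcond : ∀ n ∈ Finset.Icc 1 N, ∀ᵐ ω ∂P,
      (P[fun ω' => lhat n ω' (θ n ω') | F (n - 1)]) ω = l n ω (θ n ω)
        ∧ ∀ x : E, 0 ≤ l n ω x)
    (εhat : Ω → ℝ)
    (hεhat : ∀ ω, εhat ω
      = (1 / (N : ℝ)) * sInf ((fun x => ∑ n ∈ Finset.Icc 1 N, lhat n ω x) '' Θ))
    (hεint : Integrable εhat P)
    (hεE : ∀ᵐ ω ∂P, εhat ω ≤ Ehat)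
    (ηstar : ℝ)
    (hη : ηstar = 1 / (2 * (β + Real.sqrt (β ^ 2 + β * N * Ehat / (2 * R ^ 2)))))
    (hreg : ∀ᵐ ω ∂P,
      regret Θ N (fun n => lhat n ω) (fun n => θ n ω)
        ≤ R ^ 2 / ηstar
          + (ηstar / 2) * ∑ n ∈ Finset.Icc 1 N, ‖fderiv ℝ (lhat n ω) (θ n ω)‖ ^ 2) :
    ∫ ω, ((1 / (N : ℝ)) * ∑ n ∈ Finset.Icc 1 N, l n ω (θ n ω) - εhat ω) ∂P
      ≤ 8 * β * R ^ 2 / N + Real.sqrt (8 * β * R ^ 2 * Ehat / N) := by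
  have hl : ∀ n ∈ Icc 1 N,
      P[fun ω => lhat n ω (θ n ω) | F (n - 1)] =ᵐ[P] fun ω => l n ω (θ n ω) :=
    fun n hn => (hcond n hn).mono fun ω h => h.1
  have hl_int : ∀ n ∈ Icc 1 N, Integrable (fun ω => l n ω (θ n ω)) P :=
    fun n hn => integrable_condExp.congr (hl n hn)
  have hl_integral : ∀ n ∈ Icc 1 N, ∫ ω, l n ω (θ n ω) ∂P = ∫ ω, lhat n ω (θ n ω) ∂P :=
    fun n hn => (integral_congr_ae (hl n hn)).symm.trans (integral_condExp (F.le _))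
  have hbound : ∀ᵐ ω ∂P, 1 / (N : ℝ) * ∑ n ∈ Icc 1 N, lhat n ω (θ n ω) - εhat ω
      ≤ 8 * β * R ^ 2 / N + √(8 * β * R ^ 2 * Ehat / N) := by
    filter_upwards [(Filter.eventually_all_finset _).2 hCSN, hεE, hreg] with ω hω hε hr
    exact average_sub_le_of_regret_le hβ hR.ne' hEhat hN hω (hεhat ω) hε hη hr
  calc ∫ ω, (1 / (N : ℝ) * ∑ n ∈ Icc 1 N, l n ω (θ n ω) - εhat ω) ∂P
      = ∫ ω, (1 / (N : ℝ) * ∑ n ∈ Icc 1 N, lhat n ω (θ n ω) - εhat ω) ∂P := by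
        rw [integral_sub ((integrable_finsetSum _ hl_int).const_mul _) hεint,
          integral_sub ((integrable_finsetSum _ hint).const_mul _) hεint, integral_const_mul,
          integral_const_mul, integral_finsetSum _ hl_int, integral_finsetSum _ hint,
          sum_congr rfl hl_integral]
    _ ≤ ∫ _, (8 * β * R ^ 2 / N + √(8 * β * R ^ 2 * Ehat / N)) ∂P :=
        integral_mono_ae (((integrable_finsetSum _ hint).const_mul _).sub hεint)
          (integrable_const _) hbound
    _ = 8 * β * R ^ 2 / N + √(8 * β * R ^ 2 * Ehat / N) := by simp

/-- Theorem 1: bias-dependent convergence rate of online imitation learning in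
expectation, under the tuned constant stepsize `η*` of an admissible online algorithm. -/
theorem online_il_bias_dependent_rate_in_expectation
    {Ω : Type*} {m0 : MeasurableSpace Ω} (P : Measure Ω) [IsProbabilityMeasure P]
    (F : Filtration ℕ m0)
    {E : Type*} [NormedAddCommGroup E] [NormedSpace ℝ E]
    (Θ : Set E) (hne : Θ.Nonempty) (hcl : IsClosed Θ) (hcv : Convex ℝ Θ)
    (hsep : TopologicalSpace.IsSeparable Θ)
    (β R Ehat : ℝ) (hβ : 0 < β) (hR : 0 < R) (hEhat : 0 ≤ Ehat)
    (N : ℕ) (hN : 1 ≤ N)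
    (lhat l : ℕ → Ω → E → ℝ)
    (hCSN : ∀ n ∈ Finset.Icc 1 N, ∀ᵐ ω ∂P, IsCSN (lhat n ω) β)
    (θ : ℕ → Ω → E)
    (hθΘ : ∀ n ∈ Finset.Icc 1 N, ∀ ω, θ n ω ∈ Θ)
    (hθmeas : ∀ n ∈ Finset.Icc 1 N, StronglyMeasurable[F (n - 1)] (θ n))
    (hint : ∀ n ∈ Finset.Icc 1 N, Integrable (fun ω => lhat n ω (θ n ω)) P)
    (hcond : ∀ n ∈ Finset.Icc 1 N, ∀ᵐ ω ∂P,
      (P[fun ω' => lhat n ω' (θ n ω') | F (n - 1)]) ω = l n ω (θ n ω)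
        ∧ ∀ x : E, 0 ≤ l n ω x)
    (εhat : Ω → ℝ)
    (hεhat : ∀ ω, εhat ω
      = (1 / (N : ℝ)) * sInf ((fun x => ∑ n ∈ Finset.Icc 1 N, lhat n ω x) '' Θ))
    (hεint : Integrable εhat P)
    (hεE : ∀ᵐ ω ∂P, εhat ω ≤ Ehat)
    (ηstar : ℝ)
    (hη : ηstar = 1 / (2 * (β + Real.sqrt (β ^ 2 + β * N * Ehat / (2 * R ^ 2)))))
    (hreg : ∀ᵐ ω ∂P,
      regret Θ N (fun n => lhat n ω) (fun n => θ n ω)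
        ≤ R ^ 2 / ηstar
          + (ηstar / 2) * ∑ n ∈ Finset.Icc 1 N, ‖fderiv ℝ (lhat n ω) (θ n ω)‖ ^ 2) :
    ∫ ω, ((1 / (N : ℝ)) * ∑ n ∈ Finset.Icc 1 N, l n ω (θ n ω) - εhat ω) ∂P
      ≤ 8 * β * R ^ 2 / N + Real.sqrt (8 * β * R ^ 2 * Ehat / N) :=
  online_il_bias_dependent_rate_in_expectation_general P F Θ β R Ehat hβ hR hEhat N hN lhat l hCSN θ
    hint hcond εhat hεhat hεint hεE ηstar hη hreg
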